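/- arXiv:2508.00631 — 9 statements merged into one kernel-verified Lean document; each statement's English description precedes it below -/
import Mathlib

section
/- If β is a critical point of a polynomial p with multiplicity l (i.e., p'(z) = (z-β)^l h(z) with h(β) ≠ 0) such that p(β) ≠ 0, then β is a fixed point of Halley's method H_p with multiplier 1 + 2/l; in particular β is a repelling fixed point. -/
/-! If `p' = (X - β) ^ l * h`, the numerator `2 p p'` of Halley's correction vanishes to order `l`
at `β` and the denominator `2 p'² - p p''` to order `l - 1`, with leading coefficients
`2 p(β) h(β)` and `-l p(β) h(β)`. After cancelling, `H_p(z) = z - (z - β) u(z)` with `u`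
continuous and `u(β) = -2 / l`, so `H_p(β) = β` and `H_p'(β) = 1 - u(β) = 1 + 2 / l`. -/

noncomputable def halley (p : ℂ → ℂ) (z : ℂ) : ℂ :=
  z - 2 * p z * deriv p z / (2 * (deriv p z) ^ 2 - p z * deriv (deriv p) z)

open Polynomial

theorem hasDerivAt_sub_mul_of_continuousAt {𝕜 : Type*} [NontriviallyNormedField 𝕜]
    {u : 𝕜 → 𝕜} {β : 𝕜} (hu : ContinuousAt u β) :
    HasDerivAt (fun z => (z - β) * u z) (u β) β := by
  rw [hasDerivAt_iff_tendsto_slope]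
  refine (hu.mono_left nhdsWithin_le_nhds).congr' ?_
  filter_upwards [self_mem_nhdsWithin] with z hz
  rw [slope_def_field, sub_self, zero_mul, sub_zero, mul_div_cancel_left₀ _ (sub_ne_zero.2 hz)]

theorem pow_succ_mul_div_pow_mul {K : Type*} [Field K] (x a b : K) (m : ℕ) :
    x ^ (m + 1) * a / (x ^ m * b) = x * (a / b) := by
  rcases eq_or_ne x 0 with rfl | hx
  · simp
  · rw [pow_succ', mul_assoc, mul_div_assoc, mul_div_mul_left _ _ (pow_ne_zero m hx)]

theorem Polynomial.derivative_X_sub_C_pow_succ_mul {R : Type*} [CommRing R] (β : R) (m : ℕ)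
    (h : R[X]) :
    derivative ((X - C β) ^ (m + 1) * h)
      = (X - C β) ^ m * (((m + 1 : ℕ) : R[X]) * h + (X - C β) * derivative h) := by
  rw [derivative_mul, derivative_X_sub_C_pow, Nat.add_sub_cancel, C_eq_natCast]
  ring

theorem halley_eval (p : ℂ[X]) (z : ℂ) :
    halley (fun z => p.eval z) z = z - 2 * p.eval z * p.derivative.eval z /
      (2 * p.derivative.eval z ^ 2 - p.eval z * p.derivative.derivative.eval z) := by
  have hd : deriv (fun z => p.eval z) = fun z => p.derivative.eval z :=
    funext fun _ => Polynomial.deriv p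
  simp only [halley, hd, Polynomial.deriv]

theorem exists_halley_eq_sub_mul_div (p h : ℂ[X]) (β : ℂ) (m : ℕ)
    (hfac : p.derivative = (X - C β) ^ (m + 1) * h) :
    ∃ A B : ℂ[X], halley (fun z => p.eval z) = (fun z => z - (z - β) * (A.eval z / B.eval z)) ∧
      A.eval β = 2 * (p.eval β * h.eval β) ∧
      B.eval β = -((m + 1 : ℕ) : ℂ) * (p.eval β * h.eval β) := by
  set B : ℂ[X] := 2 * (X - C β) ^ (m + 2) * h ^ 2
    - p * (((m + 1 : ℕ) : ℂ[X]) * h + (X - C β) * h.derivative)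
  have hnum : 2 * p * p.derivative = (X - C β) ^ (m + 1) * (2 * p * h) := by
    rw [hfac]; ring
  have hden : 2 * p.derivative ^ 2 - p * p.derivative.derivative = (X - C β) ^ m * B := by
    rw [hfac, derivative_X_sub_C_pow_succ_mul]; ring
  have hBβ : B.eval β = -((m + 1 : ℕ) : ℂ) * (p.eval β * h.eval β) := by
    simp only [B, eval_sub, eval_add, eval_mul, eval_pow, eval_X, eval_C, eval_natCast, eval_ofNat]
    ring
  refine ⟨2 * p * h, B, ?_, by simp only [eval_mul, eval_ofNat]; ring, hBβ⟩
  funext z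
  have hnum_z := congrArg (eval z) hnum
  have hden_z := congrArg (eval z) hden
  simp only [eval_mul, eval_sub, eval_pow, eval_ofNat, eval_X, eval_C] at hnum_z hden_z
  rw [halley_eval, hnum_z, hden_z, pow_succ_mul_div_pow_mul, eval_mul, eval_mul, eval_ofNat]

theorem one_lt_norm_one_add_two_div_natCast {l : ℕ} (hl : l ≠ 0) : 1 < ‖1 + 2 / (l : ℂ)‖ := by
  have hcast : (1 : ℂ) + 2 / (l : ℂ) = ((1 + 2 / (l : ℝ) : ℝ) : ℂ) := by push_cast; ring
  have hpos : 0 < 2 / (l : ℝ) := by positivity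
  rw [hcast, Complex.norm_real, Real.norm_eq_abs, abs_of_pos (by linarith)]
  linarith

theorem critical_point_repelling_fixed_point (p h : Polynomial ℂ) (β : ℂ) (l : ℕ) (hl : 1 ≤ l)
    (hfac : p.derivative = (Polynomial.X - Polynomial.C β) ^ l * h)
    (hh : h.eval β ≠ 0) (hpβ : p.eval β ≠ 0) :
    halley (fun z => p.eval z) β = β ∧
    deriv (halley (fun z => p.eval z)) β = 1 + 2 / (l : ℂ) ∧
    1 < ‖deriv (halley (fun z => p.eval z)) β‖ := by
  obtain ⟨m, rfl⟩ := Nat.exists_eq_add_of_le' hl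
  obtain ⟨A, B, hH, hAβ, hBβ⟩ := exists_halley_eq_sub_mul_div p h β m hfac
  have hph : p.eval β * h.eval β ≠ 0 := mul_ne_zero hpβ hh
  have hBβ_ne : B.eval β ≠ 0 := by
    rw [hBβ]; exact mul_ne_zero (neg_ne_zero.2 (Nat.cast_ne_zero.2 m.succ_ne_zero)) hph
  have hquot : ContinuousAt (fun z => A.eval z / B.eval z) β :=
    A.continuousAt.div B.continuousAt hBβ_ne
  have hderiv : deriv (halley (fun z => p.eval z)) β = 1 + 2 / ((m + 1 : ℕ) : ℂ) := by
    have hH' := (hasDerivAt_id' β).fun_sub (hasDerivAt_sub_mul_of_continuousAt hquot)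
    rw [hH, hH'.deriv, hAβ, hBβ]
    field_simp
    ring
  refine ⟨by simp [hH], hderiv, ?_⟩
  rw [hderiv]
  exact one_lt_norm_one_add_two_div_natCast m.succ_ne_zero
end

section
/- For any polynomial p, any nonzero constant c and any affine map T(z) = αz + β with α ≠ 0, if q(z) = c·p(T(z)), then H_q(z) = T⁻¹(H_p(T(z))) wherever both sides are defined (the Scaling property of Halley's method). -/
open Polynomial

namespace Polynomial

variable {R : Type*} [CommSemiring R]

theorem eval_C_mul_comp_affine (p : R[X]) (c α β z : R) :
    (C c * p.comp (C α * X + C β)).eval z = c * p.eval (α * z + β) := by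
  simp [eval_comp]

theorem derivative_C_mul_comp_affine (p : R[X]) (c α β : R) :
    derivative (C c * p.comp (C α * X + C β)) =
      C (c * α) * (derivative p).comp (C α * X + C β) := by
  simp only [derivative_mul, derivative_C, zero_mul, zero_add, derivative_comp, derivative_add,
    derivative_X, mul_one, add_zero, C_mul]
  ring

end Polynomial

theorem halley_polynomial_eval (p : ℂ[X]) (z : ℂ) :
    halley (fun w => p.eval w) z =
      z - 2 * p.eval z * p.derivative.eval z /
        (2 * p.derivative.eval z ^ 2 - p.eval z * p.derivative.derivative.eval z) := by
  have hderiv (r : ℂ[X]) : deriv (fun w => r.eval w) = fun w => r.derivative.eval w :=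
    funext fun w => r.deriv
  simp only [halley, hderiv]

theorem halley_scaling_property_general (p q : Polynomial ℂ) (c α β : ℂ)
    (hq : q = Polynomial.C c * p.comp (Polynomial.C α * Polynomial.X + Polynomial.C β)) :
    ∀ z : ℂ,
      2 * (q.derivative.eval z) ^ 2 - q.eval z * q.derivative.derivative.eval z ≠ 0 →
      2 * (p.derivative.eval (α * z + β)) ^ 2 -
        p.eval (α * z + β) * p.derivative.derivative.eval (α * z + β) ≠ 0 →
      halley (fun w => q.eval w) z =
        (halley (fun w => p.eval w) (α * z + β) - β) / α := by
  intro z hqD _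
  have hq0 : q.eval z = c * p.eval (α * z + β) := by
    rw [hq, eval_C_mul_comp_affine]
  have hq1 : q.derivative.eval z = c * α * p.derivative.eval (α * z + β) := by
    rw [hq, derivative_C_mul_comp_affine, eval_C_mul_comp_affine]
  have hq2 :
      q.derivative.derivative.eval z = c * α * α * p.derivative.derivative.eval (α * z + β) := by
    rw [hq, derivative_C_mul_comp_affine, derivative_C_mul_comp_affine, eval_C_mul_comp_affine]
  have hD : 2 * q.derivative.eval z ^ 2 - q.eval z * q.derivative.derivative.eval z =
      c ^ 2 * α ^ 2 * (2 * p.derivative.eval (α * z + β) ^ 2 -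
        p.eval (α * z + β) * p.derivative.derivative.eval (α * z + β)) := by
    rw [hq0, hq1, hq2]; ring
  rw [hD] at hqD
  obtain ⟨hcα, hpD⟩ := mul_ne_zero_iff.mp hqD
  obtain ⟨hc, hα⟩ : c ≠ 0 ∧ α ≠ 0 := by simpa using hcα
  rw [halley_polynomial_eval, halley_polynomial_eval, hD, hq0, hq1]
  field_simp
  ring

theorem halley_scaling_property (p q : Polynomial ℂ) (c α β : ℂ) (hc : c ≠ 0) (hα : α ≠ 0)
    (hq : q = Polynomial.C c * p.comp (Polynomial.C α * Polynomial.X + Polynomial.C β)) :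
    ∀ z : ℂ,
      2 * (q.derivative.eval z) ^ 2 - q.eval z * q.derivative.derivative.eval z ≠ 0 →
      2 * (p.derivative.eval (α * z + β)) ^ 2 -
        p.eval (α * z + β) * p.derivative.derivative.eval (α * z + β) ≠ 0 →
      halley (fun w => q.eval w) z =
        (halley (fun w => p.eval w) (α * z + β) - β) / α :=
  halley_scaling_property_general p q c α β hq
end

section
/- For p(z) = (z²-1)^k with k ≥ 2, all free critical points of H_p (solutions of (4k²-1)z⁴ - 6z² + 3 = 0) and all poles of H_p (solutions of (2k+1)z² + 1 = 0) are non-real complex numbers. -/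
/- On the real line both equations are positive definite. The pole equation is a sum of a
nonnegative and a positive term. Writing `t = x²`, the critical-point equation becomes the
quadratic `a t² - 6 t + 3` with `a = 4k² - 1`, whose discriminant `36 - 12 a` is negative as soon
as `a > 3`, i.e. `k ≥ 2`. -/

lemma quadratic_pos_of_three_lt {a : ℝ} (ha : 3 < a) (t : ℝ) : 0 < a * t ^ 2 - 6 * t + 3 := by
  have h : a * (a * t ^ 2 - 6 * t + 3) = (a * t - 3) ^ 2 + 3 * (a - 3) := by ring
  have : 0 < a * (a * t ^ 2 - 6 * t + 3) := by rw [h]; nlinarith [sq_nonneg (a * t - 3)]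
  exact pos_of_mul_pos_right this (by linarith)

lemma Complex.exists_ofReal_of_im_eq_zero {z : ℂ} (hz : z.im = 0) : ∃ x : ℝ, z = x :=
  Complex.conj_eq_iff_real.mp (Complex.conj_eq_iff_im.mpr hz)

theorem free_critical_points_and_poles_nonreal (k : ℕ) (hk : 2 ≤ k) :
    ∀ z : ℂ,
      ((4 * (k : ℂ) ^ 2 - 1) * z ^ 4 - 6 * z ^ 2 + 3 = 0 ∨
        (2 * (k : ℂ) + 1) * z ^ 2 + 1 = 0) → z.im ≠ 0 := by
  intro z hz him
  obtain ⟨x, rfl⟩ := Complex.exists_ofReal_of_im_eq_zero him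
  have hk' : (2 : ℝ) ≤ k := by exact_mod_cast hk
  rcases hz with hcrit | hpole
  · have hcrit : (4 * (k : ℝ) ^ 2 - 1) * (x ^ 2) ^ 2 - 6 * x ^ 2 + 3 = 0 := by
      rw [← pow_mul]; exact_mod_cast hcrit
    exact (quadratic_pos_of_three_lt (by nlinarith) (x ^ 2)).ne' hcrit
  · have hpole : (2 * (k : ℝ) + 1) * x ^ 2 + 1 = 0 := by exact_mod_cast hpole
    have : 0 < (2 * (k : ℝ) + 1) * x ^ 2 + 1 := by positivity
    exact this.ne' hpole
end

section
/- Let p(z) = (z-1)^k (z + m/k)^m with k, m positive integers. Then H_p(z) = z(k(k+m-1)z² + 2(k-m)z + 3m)/(k(k+m+1)z² + m). Moreover, H_p maps the imaginary axis into the imaginary axis (i.e., for every real y with iy not a pole, H_p(iy) is purely imaginary) if and only if k = m. -/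
open Complex

lemma natCast_mul_pow_sub_one_mul {R : Type*} [Semiring R] (w : R) (n : ℕ) : n * w ^ (n - 1) * w = n * w ^ n := by
  rcases eq_or_ne n 0 with rfl | hn
  · simp
  · rw [mul_assoc, pow_sub_one_mul hn]

lemma hasDerivAt_sub_pow_mul_sub_pow (a b z : ℂ) (i j : ℕ) :
    HasDerivAt (fun z => (z - a) ^ i * (z - b) ^ j)
      (i * (z - a) ^ (i - 1) * (z - b) ^ j + (z - a) ^ i * (j * (z - b) ^ (j - 1))) z := by
  simpa using (((hasDerivAt_id z).sub_const a).fun_pow i).fun_mul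
    (((hasDerivAt_id z).sub_const b).fun_pow j)

lemma sub_mul_sub_mul_deriv_sub_pow_mul_sub_pow (a b z : ℂ) (i j : ℕ) :
    (z - a) * (z - b) * deriv (fun z => (z - a) ^ i * (z - b) ^ j) z =
      (z - a) ^ i * (z - b) ^ j * (i * (z - b) + j * (z - a)) := by
  rw [(hasDerivAt_sub_pow_mul_sub_pow a b z i j).deriv]
  linear_combination (z - b) ^ (j + 1) * natCast_mul_pow_sub_one_mul (z - a) i
    + (z - a) ^ (i + 1) * natCast_mul_pow_sub_one_mul (z - b) j

section TwoRoots

variable {p : ℂ → ℂ} {a b : ℂ} {K M : ℕ}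

lemma deriv_sub_pow_mul_sub_pow (hK : K ≠ 0) (hM : M ≠ 0) (hab : K * b + M * a = 0) :
    deriv (fun z => (z - a) ^ K * (z - b) ^ M) =
      fun z => (K + M) * z * ((z - a) ^ (K - 1) * (z - b) ^ (M - 1)) := by
  funext z
  rw [(hasDerivAt_sub_pow_mul_sub_pow a b z K M).deriv, ← pow_sub_one_mul hK (z - a),
    ← pow_sub_one_mul hM (z - b)]
  linear_combination -(z - a) ^ (K - 1) * (z - b) ^ (M - 1) * hab

lemma deriv_deriv_sub_pow_mul_sub_pow (hK : K ≠ 0) (hM : M ≠ 0) (hab : K * b + M * a = 0)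
    (z : ℂ) :
    deriv (deriv (fun z => (z - a) ^ K * (z - b) ^ M)) z =
      (K + M) * ((z - a) ^ (K - 1) * (z - b) ^ (M - 1)
        + z * deriv (fun z => (z - a) ^ (K - 1) * (z - b) ^ (M - 1)) z) := by
  have hq := (hasDerivAt_sub_pow_mul_sub_pow a b z (K - 1) (M - 1)).differentiableAt.hasDerivAt
  rw [deriv_sub_pow_mul_sub_pow hK hM hab,
    (((hasDerivAt_id' z).const_mul ((K : ℂ) + M)).fun_mul hq).deriv]
  ring

lemma halley_denominator_sub_pow_mul_sub_pow (hK : K ≠ 0) (hM : M ≠ 0)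
    (hab : K * b + M * a = 0) (hp : ∀ z, p z = (z - a) ^ K * (z - b) ^ M) (z : ℂ) :
    2 * deriv p z ^ 2 - p z * deriv (deriv p) z =
      (K + M) * ((z - a) ^ (K - 1) * (z - b) ^ (M - 1)) ^ 2 * ((K + M + 1) * z ^ 2 - a * b) := by
  obtain rfl : p = _ := funext hp
  have hq := sub_mul_sub_mul_deriv_sub_pow_mul_sub_pow a b z (K - 1) (M - 1)
  rw [Nat.cast_pred (Nat.pos_of_ne_zero hK), Nat.cast_pred (Nat.pos_of_ne_zero hM)] at hq
  rw [deriv_deriv_sub_pow_mul_sub_pow hK hM hab, deriv_sub_pow_mul_sub_pow hK hM hab]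
  beta_reduce
  rw [← pow_sub_one_mul hK (z - a), ← pow_sub_one_mul hM (z - b)]
  linear_combination (-(K + M) * z * ((z - a) ^ (K - 1) * (z - b) ^ (M - 1))) * hq
    + (K + M) * ((z - a) ^ (K - 1) * (z - b) ^ (M - 1)) ^ 2 * z * hab

lemma two_mul_mul_deriv_sub_pow_mul_sub_pow (hK : K ≠ 0) (hM : M ≠ 0)
    (hab : K * b + M * a = 0) (hp : ∀ z, p z = (z - a) ^ K * (z - b) ^ M) (z : ℂ) :
    2 * p z * deriv p z =
      (K + M) * ((z - a) ^ (K - 1) * (z - b) ^ (M - 1)) ^ 2 * (2 * z * ((z - a) * (z - b))) := by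
  obtain rfl : p = _ := funext hp
  rw [deriv_sub_pow_mul_sub_pow hK hM hab]
  beta_reduce
  rw [← pow_sub_one_mul hK (z - a), ← pow_sub_one_mul hM (z - b)]
  ring

theorem halley_sub_pow_mul_sub_pow (hK : K ≠ 0) (hM : M ≠ 0) (hab : K * b + M * a = 0)
    (hp : ∀ z, p z = (z - a) ^ K * (z - b) ^ M) {z : ℂ}
    (hD : 2 * deriv p z ^ 2 - p z * deriv (deriv p) z ≠ 0) :
    halley p z =
      z * ((K + M - 1) * z ^ 2 + 2 * (a + b) * z - 3 * (a * b)) /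
        ((K + M + 1) * z ^ 2 - a * b) := by
  rw [halley_denominator_sub_pow_mul_sub_pow hK hM hab hp] at hD
  have hY := right_ne_zero_of_mul hD
  rw [halley, halley_denominator_sub_pow_mul_sub_pow hK hM hab hp,
    two_mul_mul_deriv_sub_pow_mul_sub_pow hK hM hab hp,
    mul_div_mul_left _ _ (left_ne_zero_of_mul hD), eq_div_iff hY, sub_mul, div_mul_cancel₀ _ hY]
  ring

end TwoRoots

lemma re_I_mul_mul_div (α β γ δ ε y : ℝ) :
    ((I * y) * (α * (I * y) ^ 2 + β * (I * y) + γ) / (δ * (I * y) ^ 2 + ε)).re =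
      -(β * y ^ 2) / (ε - δ * y ^ 2) := by
  have hnum : (I * y) * (α * (I * y) ^ 2 + β * (I * y) + γ) =
      ((-(β * y ^ 2) : ℝ) : ℂ) + ((y * (γ - α * y ^ 2) : ℝ) : ℂ) * I := by
    push_cast
    linear_combination (β * y ^ 2 + α * y ^ 3 * I) * I_sq
  have hden : δ * (I * y) ^ 2 + ε = ((ε - δ * y ^ 2 : ℝ) : ℂ) := by
    push_cast
    linear_combination δ * y ^ 2 * I_sq
  rw [hnum, hden, div_ofReal_re, add_re, ofReal_re, mul_I_re, ofReal_im, neg_zero, add_zero]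

section NormalizedRoots

variable {k m : ℕ} {p : ℂ → ℂ}

lemma sub_pow_mul_sub_neg_div_pow
    (hp : ∀ z, p z = (z - 1) ^ k * (z + (m : ℂ) / (k : ℂ)) ^ m) :
    ∀ z, p z = (z - 1) ^ k * (z - -(m / k : ℂ)) ^ m := by
  simpa only [sub_neg_eq_add] using hp

lemma natCast_mul_neg_div_add_natCast_mul_one (hk : 1 ≤ k) :
    (k : ℂ) * -(m / k : ℂ) + m * 1 = 0 := by
  have hk0 : (k : ℂ) ≠ 0 := by exact_mod_cast (by omega : k ≠ 0)
  field_simp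
  ring

theorem halley_sub_one_pow_mul_add_div_pow (hk : 1 ≤ k) (hm : 1 ≤ m)
    (hp : ∀ z, p z = (z - 1) ^ k * (z + (m : ℂ) / (k : ℂ)) ^ m) {z : ℂ}
    (hD : 2 * deriv p z ^ 2 - p z * deriv (deriv p) z ≠ 0) :
    halley p z =
      z * ((k : ℂ) * ((k : ℂ) + (m : ℂ) - 1) * z ^ 2 + 2 * ((k : ℂ) - (m : ℂ)) * z
        + 3 * (m : ℂ)) / ((k : ℂ) * ((k : ℂ) + (m : ℂ) + 1) * z ^ 2 + (m : ℂ)) := by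
  have hk0 : (k : ℂ) ≠ 0 := by exact_mod_cast (by omega : k ≠ 0)
  rw [halley_sub_pow_mul_sub_pow (by omega) (by omega) (natCast_mul_neg_div_add_natCast_mul_one hk)
    (sub_pow_mul_sub_neg_div_pow hp) hD, ← mul_div_mul_left _ _ hk0]
  congr 1 <;> field_simp <;> ring

lemma re_halley_sub_one_pow_mul_add_div_pow_I_mul (hk : 1 ≤ k) (hm : 1 ≤ m)
    (hp : ∀ z, p z = (z - 1) ^ k * (z + (m : ℂ) / (k : ℂ)) ^ m) {y : ℝ}
    (hD : 2 * deriv p (I * y) ^ 2 - p (I * y) * deriv (deriv p) (I * y) ≠ 0) :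
    (halley p (I * y)).re = -(2 * (k - m) * y ^ 2) / (m - k * (k + m + 1) * y ^ 2) := by
  have hre := re_I_mul_mul_div (k * (k + m - 1)) (2 * (k - m)) (3 * m) (k * (k + m + 1)) m y
  push_cast at hre
  rw [halley_sub_one_pow_mul_add_div_pow hk hm hp hD, hre]

lemma halley_denominator_sub_one_pow_mul_add_div_pow_I_ne_zero (hk : 1 ≤ k) (hm : 1 ≤ m)
    (hp : ∀ z, p z = (z - 1) ^ k * (z + (m : ℂ) / (k : ℂ)) ^ m) :
    2 * deriv p I ^ 2 - p I * deriv (deriv p) I ≠ 0 := by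
  rw [halley_denominator_sub_pow_mul_sub_pow (by omega) (by omega)
    (natCast_mul_neg_div_add_natCast_mul_one hk) (sub_pow_mul_sub_neg_div_pow hp)]
  refine mul_ne_zero (mul_ne_zero ?_ (pow_ne_zero _ (mul_ne_zero (pow_ne_zero _ ?_)
    (pow_ne_zero _ ?_)))) ?_
  · exact_mod_cast (by omega : k + m ≠ 0)
  · intro h
    simpa using congrArg im h
  · intro h
    simpa using congrArg im h
  · intro h
    have hk0 : (k : ℂ) ≠ 0 := by exact_mod_cast (by omega : k ≠ 0)
    have hmk : (m : ℂ) = k * (k + m + 1) := by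
      field_simp at h
      linear_combination h - k * (k + m + 1) * I_sq
    exact (by nlinarith : m < k * (k + m + 1)).ne (by exact_mod_cast hmk)

end NormalizedRoots

theorem halley_two_roots_imaginary_axis (k m : ℕ) (hk : 1 ≤ k) (hm : 1 ≤ m)
    (p : ℂ → ℂ) (hp : ∀ z, p z = (z - 1) ^ k * (z + (m : ℂ) / (k : ℂ)) ^ m) :
    (∀ z : ℂ, 2 * (deriv p z) ^ 2 - p z * deriv (deriv p) z ≠ 0 →
      halley p z =
        z * ((k : ℂ) * ((k : ℂ) + (m : ℂ) - 1) * z ^ 2 + 2 * ((k : ℂ) - (m : ℂ)) * z + 3 * (m : ℂ)) /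
          ((k : ℂ) * ((k : ℂ) + (m : ℂ) + 1) * z ^ 2 + (m : ℂ))) ∧
    ((∀ y : ℝ,
        2 * (deriv p (Complex.I * y)) ^ 2 -
          p (Complex.I * y) * deriv (deriv p) (Complex.I * y) ≠ 0 →
        (halley p (Complex.I * y)).re = 0) ↔ k = m) := by
  refine ⟨fun z hD => halley_sub_one_pow_mul_add_div_pow hk hm hp hD, fun h => ?_, ?_⟩
  · have hD : 2 * deriv p (I * (1 : ℝ)) ^ 2 - p (I * (1 : ℝ)) * deriv (deriv p) (I * (1 : ℝ))
        ≠ 0 := by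
      simpa using halley_denominator_sub_one_pow_mul_add_div_pow_I_ne_zero hk hm hp
    have hre := h 1 hD
    rw [re_halley_sub_one_pow_mul_add_div_pow_I_mul hk hm hp hD, one_pow, mul_one, mul_one,
      div_eq_zero_iff] at hre
    have hmk : (m : ℝ) ≠ k * (k + m + 1) := by
      exact_mod_cast (by nlinarith : m < k * (k + m + 1)).ne
    have hkm : (k : ℝ) = m := by linarith [hre.resolve_right (sub_ne_zero.mpr hmk)]
    exact_mod_cast hkm
  · rintro rfl y hD
    rw [re_halley_sub_one_pow_mul_add_div_pow_I_mul hk hm hp hD]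
    simp
end

section
/- For p(z) = z^n - 1 with n ≥ 2, H_p(z) = z((n-1)z^n + (n+1))/((n+1)z^n + (n-1)) satisfies H_p(x) < x for every real x > 1, H_p is strictly increasing on (1, ∞), and H_p has no fixed point, zero of H_p', or pole in (1, ∞). Consequently, for every x > 1 the iterates H_p^j(x) converge to 1. -/
/-!
Writing `N = x((n-1)xⁿ + (n+1))` and `D = (n+1)xⁿ + (n-1)`, one has `x D - N = 2x(xⁿ - 1)` and
`N' D - N D' = (n² - 1)(xⁿ - 1)²`, so on `(1, ∞)` the Halley map of `zⁿ - 1` lies strictly below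
the diagonal and has positive derivative; since it fixes `1`, it maps `(1, ∞)` into itself. Every
orbit in `(1, ∞)` is then decreasing and bounded below, and its limit is a fixed point of the
continuous map, which can only be `1`.
-/

open Set Filter Topology Function

section IterateDecreasing

variable {α : Type*} [ConditionallyCompleteLinearOrder α] [TopologicalSpace α] [OrderTopology α]

theorem tendsto_iterate_of_mapsTo_Ioi_of_lt_self {f : α → α} {a x : α}
    (hcont : ContinuousOn f (Ioi a)) (hmaps : MapsTo f (Ioi a) (Ioi a))
    (hlt : ∀ y ∈ Ioi a, f y < y) (hx : a < x) :
    Tendsto (fun j => f^[j] x) atTop (𝓝 a) := by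
  have horbit : ∀ j, a < f^[j] x := fun j => hmaps.iterate j hx
  have hanti : Antitone (fun j => f^[j] x) := antitone_nat_of_succ_le fun j => by
    rw [iterate_succ_apply']
    exact (hlt _ (horbit j)).le
  have hbdd : BddBelow (range fun j => f^[j] x) := ⟨a, by rintro _ ⟨j, rfl⟩; exact (horbit j).le⟩
  have hlim := tendsto_atTop_ciInf hanti hbdd
  rcases (le_ciInf fun j => (horbit j).le).eq_or_lt with heq | hgt
  · rwa [← heq] at hlim
  · have hfix := isFixedPt_of_tendsto_iterate hlim (hcont.continuousAt (Ioi_mem_nhds hgt))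
    exact absurd hfix (hlt _ hgt).ne

end IterateDecreasing

/-- Halley's method for `zⁿ - 1`, restricted to the real line. -/
noncomputable def halleyPowSubOne (n : ℕ) (x : ℝ) : ℝ :=
  x * (((n : ℝ) - 1) * x ^ n + ((n : ℝ) + 1)) / (((n : ℝ) + 1) * x ^ n + ((n : ℝ) - 1))

namespace halleyPowSubOne

variable {n : ℕ} {x : ℝ}

theorem denom_pos (hn : 1 ≤ n) (hx : 0 < x) : 0 < ((n : ℝ) + 1) * x ^ n + ((n : ℝ) - 1) := by
  have hn' : (1 : ℝ) ≤ n := by exact_mod_cast hn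
  have := pow_pos hx n
  nlinarith

theorem apply_one (hn : 1 ≤ n) : halleyPowSubOne n 1 = 1 := by
  have hn' : (1 : ℝ) ≤ n := by exact_mod_cast hn
  rw [halleyPowSubOne, div_eq_one_iff_eq] <;> · simp only [one_pow]; linarith

theorem lt_self (hn : 1 ≤ n) (hx : 1 < x) : halleyPowSubOne n x < x := by
  rw [halleyPowSubOne, div_lt_iff₀ (denom_pos hn (by linarith))]
  have : 1 < x ^ n := one_lt_pow₀ hx (by omega)
  nlinarith

theorem hasDerivAt (hn : 1 ≤ n) (hD : ((n : ℝ) + 1) * x ^ n + ((n : ℝ) - 1) ≠ 0) :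
    HasDerivAt (halleyPowSubOne n)
      (((n : ℝ) ^ 2 - 1) * (x ^ n - 1) ^ 2 / (((n : ℝ) + 1) * x ^ n + ((n : ℝ) - 1)) ^ 2) x := by
  have hnum := (hasDerivAt_id x).mul
    (((hasDerivAt_pow n x).const_mul ((n : ℝ) - 1)).add_const ((n : ℝ) + 1))
  have hden := ((hasDerivAt_pow n x).const_mul ((n : ℝ) + 1)).add_const ((n : ℝ) - 1)
  refine (hnum.div hden hD).congr_deriv ?_
  have hxn : x ^ n = x * x ^ (n - 1) := by rw [← pow_succ', Nat.sub_add_cancel hn]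
  simp only [Pi.mul_apply, id]
  rw [div_eq_div_iff (pow_ne_zero _ hD) (pow_ne_zero _ hD), hxn]
  ring

theorem continuousOn_Ici (hn : 1 ≤ n) : ContinuousOn (halleyPowSubOne n) (Ici 1) := fun x hx =>
  (hasDerivAt hn (denom_pos hn (by linarith [mem_Ici.mp hx])).ne').continuousAt.continuousWithinAt

theorem deriv_pos (hn : 2 ≤ n) (hx : 1 < x) : 0 < deriv (halleyPowSubOne n) x := by
  have hD := denom_pos (n := n) (by omega) (by linarith : 0 < x)
  rw [(hasDerivAt (by omega) hD.ne').deriv]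
  have hn' : (2 : ℝ) ≤ n := by exact_mod_cast hn
  have hcoef : (0 : ℝ) < (n : ℝ) ^ 2 - 1 := by nlinarith
  have hxn : 0 < x ^ n - 1 := sub_pos.mpr (one_lt_pow₀ hx (by omega))
  positivity

theorem strictMonoOn_Ici (hn : 2 ≤ n) : StrictMonoOn (halleyPowSubOne n) (Ici 1) :=
  strictMonoOn_of_deriv_pos (convex_Ici 1) (continuousOn_Ici (by omega)) fun x hx =>
    deriv_pos hn (by rwa [interior_Ici] at hx)

theorem mapsTo_Ioi (hn : 2 ≤ n) : MapsTo (halleyPowSubOne n) (Ioi 1) (Ioi 1) := fun x hx => by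
  have := strictMonoOn_Ici hn self_mem_Ici (mem_Ici.mpr (le_of_lt hx)) hx
  rwa [apply_one (by omega)] at this

end halleyPowSubOne

open halleyPowSubOne in
theorem halley_unicritical_real_dynamics (n : ℕ) (hn : 2 ≤ n)
    (f : ℝ → ℝ)
    (hf : ∀ x, f x = x * (((n : ℝ) - 1) * x ^ n + ((n : ℝ) + 1)) /
      (((n : ℝ) + 1) * x ^ n + ((n : ℝ) - 1))) :
    (∀ x : ℝ, 1 < x → f x < x) ∧
    StrictMonoOn f (Set.Ioi 1) ∧
    (∀ x : ℝ, 1 < x →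
      f x ≠ x ∧ deriv f x ≠ 0 ∧ ((n : ℝ) + 1) * x ^ n + ((n : ℝ) - 1) ≠ 0) ∧
    (∀ x : ℝ, 1 < x →
      Filter.Tendsto (fun j => f^[j] x) Filter.atTop (nhds 1)) := by
  obtain rfl : f = halleyPowSubOne n := funext hf
  have hn1 : 1 ≤ n := by omega
  refine ⟨fun x hx => lt_self hn1 hx, (strictMonoOn_Ici hn).mono Ioi_subset_Ici_self,
    fun x hx => ⟨(lt_self hn1 hx).ne, (deriv_pos hn hx).ne', (denom_pos hn1 (by linarith)).ne'⟩,
    fun x hx => ?_⟩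
  exact tendsto_iterate_of_mapsTo_Ioi_of_lt_self
    ((continuousOn_Ici hn1).mono Ioi_subset_Ici_self) (mapsTo_Ioi hn) (fun y hy => lt_self hn1 hy) hx
end

section
/- For p(z) = z(z²-1) and φ(y) = y³(3y²-1)/(6y⁴ + 3y² + 1), every real y satisfies φ^n(y) → 0 as n → ∞. In particular the imaginary axis is contained in the basin of attraction of the root 0 of p under H_p. -/
open Filter Topology Complex

theorem tendsto_iterate_nhds_zero_of_norm_le {E : Type*} [SeminormedAddCommGroup E]
    {f : E → E} {c : ℝ} (hc0 : 0 ≤ c) (hc : c < 1) (hf : ∀ x, ‖f x‖ ≤ c * ‖x‖) (x : E) :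
    Tendsto (fun n => f^[n] x) atTop (𝓝 0) := by
  have hbound (n : ℕ) : ‖f^[n] x‖ ≤ c ^ n * ‖x‖ := by
    induction n with
    | zero => simp
    | succ n ih =>
      rw [Function.iterate_succ_apply', pow_succ', mul_assoc]
      exact (hf _).trans (mul_le_mul_of_nonneg_left ih hc0)
  refine squeeze_zero_norm hbound ?_
  simpa using (tendsto_pow_atTop_nhds_zero_of_lt_one hc0 hc).mul_const ‖x‖

noncomputable def halleyImag (y : ℝ) : ℝ := y ^ 3 * (3 * y ^ 2 - 1) / (6 * y ^ 4 + 3 * y ^ 2 + 1)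

theorem abs_halleyImag_le (y : ℝ) : |halleyImag y| ≤ 2⁻¹ * |y| := by
  have hD : 0 < 6 * y ^ 4 + 3 * y ^ 2 + 1 := by positivity
  have h3 : |3 * y ^ 2 - 1| ≤ 3 * y ^ 2 + 1 :=
    abs_le.2 ⟨by nlinarith [sq_nonneg y], by linarith⟩
  rw [halleyImag, abs_div, abs_of_pos hD, div_le_iff₀ hD, abs_mul, abs_pow]
  calc |y| ^ 3 * |3 * y ^ 2 - 1| ≤ |y| ^ 3 * (3 * y ^ 2 + 1) := by gcongr
    _ = 2⁻¹ * |y| * (6 * y ^ 4 + 2 * y ^ 2) := by rw [pow_succ', sq_abs]; ring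
    _ ≤ 2⁻¹ * |y| * (6 * y ^ 4 + 3 * y ^ 2 + 1) := by
      gcongr _ * ?_
      nlinarith [sq_nonneg y]

theorem deriv_mul_sq_sub_one : deriv (fun z : ℂ => z * (z ^ 2 - 1)) = fun z => 3 * z ^ 2 - 1 :=
  funext fun z =>
    ((hasDerivAt_id' z).mul ((hasDerivAt_pow 2 z).sub_const 1)).deriv.trans (by ring)

theorem deriv_deriv_mul_sq_sub_one :
    deriv (deriv fun z : ℂ => z * (z ^ 2 - 1)) = fun z => 6 * z := by
  rw [deriv_mul_sq_sub_one]
  exact funext fun z => (((hasDerivAt_pow 2 z).const_mul 3).sub_const 1).deriv.trans (by ring)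

theorem halley_mul_sq_sub_one {z : ℂ} (hz : 6 * z ^ 4 - 3 * z ^ 2 + 1 ≠ 0) :
    halley (fun z => z * (z ^ 2 - 1)) z = z ^ 3 * (3 * z ^ 2 + 1) / (6 * z ^ 4 - 3 * z ^ 2 + 1) := by
  have hden : 2 * (3 * z ^ 2 - 1) ^ 2 - z * (z ^ 2 - 1) * (6 * z) =
      2 * (6 * z ^ 4 - 3 * z ^ 2 + 1) := by ring
  rw [halley, deriv_deriv_mul_sq_sub_one, deriv_mul_sq_sub_one, hden, mul_assoc 2,
    mul_div_mul_left _ _ two_ne_zero, sub_div' hz, div_left_inj' hz]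
  ring

theorem halley_mul_sq_sub_one_I_mul (y : ℝ) :
    halley (fun z => z * (z ^ 2 - 1)) (I * y) = I * halleyImag y := by
  have hD : (6 * y ^ 4 + 3 * y ^ 2 + 1 : ℂ) ≠ 0 := by
    exact_mod_cast (by positivity : (0 : ℝ) < 6 * y ^ 4 + 3 * y ^ 2 + 1).ne'
  have hI2 : (I * y) ^ 2 = -(y : ℂ) ^ 2 := by rw [mul_pow, I_sq]; ring
  have hI3 : (I * y) ^ 3 = -I * (y : ℂ) ^ 3 := by rw [pow_succ, hI2]; ring
  have hI4 : (I * y) ^ 4 = (y : ℂ) ^ 4 := by rw [show 4 = 2 * 2 by rfl, pow_mul, hI2]; ring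
  rw [halley_mul_sq_sub_one (by rw [hI4, hI2]; convert hD using 1; ring), hI4, hI3, hI2]
  push_cast [halleyImag]
  field_simp
  ring

theorem imaginary_axis_in_basin_of_zero
    (p : ℂ → ℂ) (hp : ∀ z, p z = z * (z ^ 2 - 1))
    (φ : ℝ → ℝ)
    (hφ : ∀ y, φ y = y ^ 3 * (3 * y ^ 2 - 1) / (6 * y ^ 4 + 3 * y ^ 2 + 1)) :
    (∀ y : ℝ, Filter.Tendsto (fun n => φ^[n] y) Filter.atTop (nhds 0)) ∧
    (∀ y : ℝ, Filter.Tendsto (fun n => (halley p)^[n] (Complex.I * y))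
      Filter.atTop (nhds 0)) := by
  obtain rfl : p = fun z => z * (z ^ 2 - 1) := funext hp
  obtain rfl : φ = halleyImag := funext hφ
  have hφ_tendsto (y : ℝ) : Tendsto (fun n => halleyImag^[n] y) atTop (𝓝 0) :=
    tendsto_iterate_nhds_zero_of_norm_le (by norm_num) (by norm_num) abs_halleyImag_le y
  refine ⟨hφ_tendsto, fun y => ?_⟩
  have hsemiconj : Function.Semiconj (fun t : ℝ => I * t) halleyImag
      (halley fun z => z * (z ^ 2 - 1)) :=
    fun t => (halley_mul_sq_sub_one_I_mul t).symm
  have hcont : Tendsto (fun t : ℝ => I * t) (𝓝 0) (𝓝 0) :=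
    ((continuous_const_mul I).comp continuous_ofReal).tendsto' 0 0 (by simp)
  simpa only [Function.comp_def, hsemiconj.iterate_right _ _] using hcont.comp (hφ_tendsto y)
end

section
/- For p(z) = z²(z²-1), Halley's method is H_p(z) = z(6z⁴ - 3z² + 1)/(10z⁴ - 9z² + 3), and H_p maps the imaginary axis to itself: H_p(iy) = iQ(y) with Q(y) = y(6y⁴ + 3y² + 1)/(10y⁴ + 9y² + 3). Moreover Q(y) - y = -2y(y²+1)(2y²+1)/(10y⁴+9y²+3), so Q(y) < y for all y > 0 and Q(y) > y for all y < 0, and hence Q^n(y) → 0 for every real y. -/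
/-!
Since `p'(z) = 4z³ - 2z` and `p''(z) = 12z² - 2`, the Halley denominator is
`2z²(10z⁴ - 9z² + 3)`, and cancelling `2z²` gives the rational form of `H_p`. It only involves
`z²`, `z⁴` and an odd factor `z`, so on `z = iy` it becomes `i Q(y)` with `Q` real and odd.
By the factorisation of `Q(y) - y`, `Q` moves every `y > 0` strictly towards `0` while keeping it
positive, so the orbit of `y > 0` decreases to a limit which, by continuity, is a fixed point
of `Q` in `[0, ∞)`, hence `0`; oddness of `Q` handles `y < 0`.
-/

open Filter Topology Complex

theorem tendsto_iterate_nhds_zero_of_pos_of_lt_self {f : ℝ → ℝ} (hf : Continuous f)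
    (h0 : f 0 = 0) (hpos : ∀ x, 0 < x → 0 < f x) (hlt : ∀ x, 0 < x → f x < x)
    {y : ℝ} (hy : 0 ≤ y) : Tendsto (fun n => f^[n] y) atTop (𝓝 0) := by
  have hmaps : Set.MapsTo f (Set.Ici 0) (Set.Ici 0) := fun x (hx : 0 ≤ x) =>
    hx.eq_or_lt.elim (fun h => h ▸ h0.ge) fun h => (hpos x h).le
  have hnonneg (n : ℕ) : 0 ≤ f^[n] y := hmaps.iterate n hy
  have hanti : Antitone (fun n => f^[n] y) := antitone_nat_of_succ_le fun n => by
    rw [Function.iterate_succ_apply']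
    rcases (hnonneg n).eq_or_lt with h | h
    · rw [← h, h0]
    · exact (hlt _ h).le
  have hlim := tendsto_atTop_ciInf hanti ⟨0, by rintro _ ⟨n, rfl⟩; exact hnonneg n⟩
  have hfix := isFixedPt_of_tendsto_iterate hlim hf.continuousAt
  rcases (le_ciInf hnonneg).eq_or_lt with h | h
  · rwa [← h] at hlim
  · exact absurd hfix (hlt _ h).ne

def quartic (z : ℂ) : ℂ := z ^ 2 * (z ^ 2 - 1)

theorem deriv_quartic : deriv quartic = fun z => 4 * z ^ 3 - 2 * z := by
  ext z
  have h : HasDerivAt quartic (↑2 * z ^ (2 - 1) * (z ^ 2 - 1) + z ^ 2 * (↑2 * z ^ (2 - 1))) z :=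
    (hasDerivAt_pow 2 z).mul ((hasDerivAt_pow 2 z).sub_const 1)
  rw [h.deriv]
  push_cast
  ring

theorem deriv_deriv_quartic : deriv (deriv quartic) = fun z => 12 * z ^ 2 - 2 := by
  ext z
  have h : HasDerivAt (fun z : ℂ => 4 * z ^ 3 - 2 * z) (4 * (↑3 * z ^ (3 - 1)) - 2 * 1) z :=
    ((hasDerivAt_pow 3 z).const_mul 4).sub ((hasDerivAt_id z).const_mul 2)
  rw [deriv_quartic, h.deriv]
  push_cast
  ring

theorem halley_quartic_of_ne_zero {z : ℂ} (hz : z ≠ 0) (hD : 10 * z ^ 4 - 9 * z ^ 2 + 3 ≠ 0) :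
    halley quartic z = z * (6 * z ^ 4 - 3 * z ^ 2 + 1) / (10 * z ^ 4 - 9 * z ^ 2 + 3) := by
  have hden : 2 * (4 * z ^ 3 - 2 * z) ^ 2 - quartic z * (12 * z ^ 2 - 2) =
      2 * z ^ 2 * (10 * z ^ 4 - 9 * z ^ 2 + 3) := by
    rw [quartic]
    ring
  have hden_ne : 2 * z ^ 2 * (10 * z ^ 4 - 9 * z ^ 2 + 3) ≠ 0 := by simp [hz, hD]
  rw [halley, deriv_deriv_quartic, deriv_quartic, hden, sub_div' hden_ne,
    div_eq_div_iff hden_ne hD, quartic]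
  ring

theorem halley_quartic_zero : halley quartic 0 = 0 := by
  simp [halley, quartic]

noncomputable def halleyQuarticImag (y : ℝ) : ℝ :=
  y * (6 * y ^ 4 + 3 * y ^ 2 + 1) / (10 * y ^ 4 + 9 * y ^ 2 + 3)

theorem halleyQuarticImag_denom_pos (y : ℝ) : 0 < 10 * y ^ 4 + 9 * y ^ 2 + 3 := by
  positivity

theorem halley_quartic_I_mul (y : ℝ) : halley quartic (I * y) = I * halleyQuarticImag y := by
  rcases eq_or_ne y 0 with rfl | hy
  · simp [halley_quartic_zero, halleyQuarticImag]
  have hsq : (I * y) ^ 2 = -(y : ℂ) ^ 2 := by rw [mul_pow, I_sq]; ring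
  have hfourth : (I * y) ^ 4 = (y : ℂ) ^ 4 := by
    rw [show (I * y) ^ 4 = ((I * y) ^ 2) ^ 2 by ring, hsq]
    ring
  have hdenom : 10 * (I * y) ^ 4 - 9 * (I * y) ^ 2 + 3 = ((10 * y ^ 4 + 9 * y ^ 2 + 3 : ℝ) : ℂ) := by
    rw [hfourth, hsq]
    push_cast
    ring
  have hdenom_ne : 10 * (I * y) ^ 4 - 9 * (I * y) ^ 2 + 3 ≠ 0 := by
    rw [hdenom]
    exact_mod_cast (halleyQuarticImag_denom_pos y).ne'
  rw [halley_quartic_of_ne_zero (by simpa using hy) hdenom_ne, hdenom, halleyQuarticImag, hfourth, hsq]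
  push_cast
  ring

theorem halleyQuarticImag_sub_self (y : ℝ) : halleyQuarticImag y - y =
    -(2 * y * (y ^ 2 + 1) * (2 * y ^ 2 + 1)) / (10 * y ^ 4 + 9 * y ^ 2 + 3) := by
  have := (halleyQuarticImag_denom_pos y).ne'
  rw [halleyQuarticImag]
  field_simp
  ring

theorem halleyQuarticImag_lt_self {y : ℝ} (hy : 0 < y) : halleyQuarticImag y < y := by
  have hdiff := halleyQuarticImag_sub_self y
  have : -(2 * y * (y ^ 2 + 1) * (2 * y ^ 2 + 1)) / (10 * y ^ 4 + 9 * y ^ 2 + 3) < 0 :=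
    div_neg_of_neg_of_pos (neg_neg_of_pos (by positivity)) (halleyQuarticImag_denom_pos y)
  linarith

theorem halleyQuarticImag_neg (y : ℝ) : halleyQuarticImag (-y) = -halleyQuarticImag y := by
  simp only [halleyQuarticImag]
  ring

theorem lt_halleyQuarticImag_self {y : ℝ} (hy : y < 0) : y < halleyQuarticImag y := by
  have := halleyQuarticImag_lt_self (neg_pos.mpr hy)
  rw [halleyQuarticImag_neg] at this
  linarith

theorem halleyQuarticImag_pos {y : ℝ} (hy : 0 < y) : 0 < halleyQuarticImag y :=
  div_pos (by positivity) (halleyQuarticImag_denom_pos y)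

theorem continuous_halleyQuarticImag : Continuous halleyQuarticImag :=
  Continuous.div (by fun_prop) (by fun_prop) fun y => (halleyQuarticImag_denom_pos y).ne'

theorem tendsto_iterate_halleyQuarticImag (y : ℝ) :
    Tendsto (fun n => halleyQuarticImag^[n] y) atTop (𝓝 0) := by
  have hzero : halleyQuarticImag 0 = 0 := by simp [halleyQuarticImag]
  have key : ∀ {y : ℝ}, 0 ≤ y → Tendsto (fun n => halleyQuarticImag^[n] y) atTop (𝓝 0) :=
    tendsto_iterate_nhds_zero_of_pos_of_lt_self continuous_halleyQuarticImag hzero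
      (fun _ => halleyQuarticImag_pos) (fun _ => halleyQuarticImag_lt_self)
  rcases le_or_gt 0 y with hy | hy
  · exact key hy
  have hcomm : Function.Commute halleyQuarticImag Neg.neg := halleyQuarticImag_neg
  simpa [(hcomm.iterate_left _).eq] using (key (neg_nonneg.mpr hy.le)).neg

theorem halley_quartic_zsq_zsq_minus_one
    (p : ℂ → ℂ) (hp : ∀ z, p z = z ^ 2 * (z ^ 2 - 1))
    (Q : ℝ → ℝ)
    (hQ : ∀ y, Q y = y * (6 * y ^ 4 + 3 * y ^ 2 + 1) / (10 * y ^ 4 + 9 * y ^ 2 + 3)) :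
    (∀ z : ℂ, z ≠ 0 → 10 * z ^ 4 - 9 * z ^ 2 + 3 ≠ 0 →
      halley p z = z * (6 * z ^ 4 - 3 * z ^ 2 + 1) / (10 * z ^ 4 - 9 * z ^ 2 + 3)) ∧
    (∀ y : ℝ, halley p (Complex.I * y) = Complex.I * (Q y : ℂ)) ∧
    (∀ y : ℝ, Q y - y =
      -(2 * y * (y ^ 2 + 1) * (2 * y ^ 2 + 1)) / (10 * y ^ 4 + 9 * y ^ 2 + 3)) ∧
    (∀ y : ℝ, 0 < y → Q y < y) ∧
    (∀ y : ℝ, y < 0 → y < Q y) ∧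
    (∀ y : ℝ, Filter.Tendsto (fun n => Q^[n] y) Filter.atTop (nhds 0)) := by
  obtain rfl : p = quartic := funext hp
  obtain rfl : Q = halleyQuarticImag := funext hQ
  exact ⟨fun _ => halley_quartic_of_ne_zero, halley_quartic_I_mul, halleyQuarticImag_sub_self,
    fun _ => halleyQuarticImag_lt_self, fun _ => lt_halleyQuarticImag_self,
    tendsto_iterate_halleyQuarticImag⟩
end

section
/- For p(z) = z(z^n - 1) with n ≥ 2, Halley's method is H_p(z) = n z^{n+1}((n+1)z^n + (n-1)) / ((n+2)(n+1)z^{2n} + (n+1)(n-4)z^n + 2), with derivative H_p'(z) = n(n+1) z^n (z^n - 1)² ((n+1)(n+2)z^n + 2(n-1)) / ((n+2)(n+1)z^{2n} + (n+1)(n-4)z^n + 2)². The free critical points satisfy z^n = -2(n-1)/((n+1)(n+2)), and the poles satisfy z^n = (-(n-4)(n+1) ± n√((n-7)(n+1)))/(2(n+1)(n+2)). In particular, for 2 ≤ n < 7 all poles of H_p are non-real. -/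
lemma mul_natCast_mul_pow_sub_one {R : Type*} [CommSemiring R] (n : ℕ) (z : R) :
    z * (n * z ^ (n - 1)) = n * z ^ n := by
  rcases n with _ | n
  · simp
  · simp only [Nat.add_sub_cancel, pow_succ]
    ring

section Calculus

variable {𝕜 : Type*} [NontriviallyNormedField 𝕜]

lemma HasDerivAt.id_mul_comp_pow {f : 𝕜 → 𝕜} {f' z : 𝕜} (n : ℕ)
    (hf : HasDerivAt f f' (z ^ n)) :
    HasDerivAt (fun w => w * f (w ^ n)) (f (z ^ n) + n * z ^ n * f') z := by
  refine ((hasDerivAt_id z).mul (hf.comp z (hasDerivAt_pow n z))).congr_deriv ?_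
  show 1 * f (z ^ n) + z * (f' * (n * z ^ (n - 1))) = _
  rw [← mul_natCast_mul_pow_sub_one]
  ring

lemma deriv_mul_pow_sub_one (n : ℕ) :
    deriv (fun z : 𝕜 => z * (z ^ n - 1)) = fun z => ((n : 𝕜) + 1) * z ^ n - 1 := by
  have h : (fun z : 𝕜 => z * (z ^ n - 1)) = fun z => z ^ (n + 1) - z := by
    funext z
    ring
  funext z
  simp [h]

lemma deriv_deriv_mul_pow_sub_one (n : ℕ) (z : 𝕜) :
    deriv (deriv (fun z : 𝕜 => z * (z ^ n - 1))) z = (n + 1) * (n * z ^ (n - 1)) := by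
  rw [deriv_mul_pow_sub_one]
  exact (((hasDerivAt_pow n z).const_mul _).sub_const 1).deriv

end Calculus

section Quadratic

variable {R : Type*} [CommRing R]

def halleyNum (n : ℕ) (u : R) : R :=
  n * u * ((n + 1) * u + (n - 1))

def halleyDen (n : ℕ) (u : R) : R :=
  (n + 2) * (n + 1) * (u * u) + (n + 1) * (n - 4) * u + 2

lemma discrim_halleyDen (n : ℕ) :
    discrim ((n + 2) * (n + 1) : R) ((n + 1) * (n - 4)) 2 = n ^ 2 * ((n - 7) * (n + 1)) := by
  rw [discrim]
  ring

end Quadratic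

lemma hasDerivAt_halleyNum {𝕜 : Type*} [NontriviallyNormedField 𝕜] (n : ℕ) (u : 𝕜) :
    HasDerivAt (halleyNum n) (n * ((n + 1) * u + (n - 1)) + n * u * (n + 1)) u :=
  (((hasDerivAt_id' u).const_mul (n : 𝕜)).mul
    (((hasDerivAt_id' u).const_mul ((n : 𝕜) + 1)).add_const ((n : 𝕜) - 1))).congr_deriv (by ring)

lemma hasDerivAt_halleyDen {𝕜 : Type*} [NontriviallyNormedField 𝕜] (n : ℕ) (u : 𝕜) :
    HasDerivAt (halleyDen n) ((n + 2) * (n + 1) * (2 * u) + (n + 1) * (n - 4)) u :=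
  (((((hasDerivAt_id' u).mul (hasDerivAt_id' u)).const_mul ((n + 2) * (n + 1) : 𝕜)).add
    ((hasDerivAt_id' u).const_mul ((n + 1) * (n - 4) : 𝕜))).add_const 2).congr_deriv
    (by ring)

lemma halleyDen_eq_zero_iff (n : ℕ) {w : ℂ} (hw : w ^ 2 = ((n : ℂ) - 7) * ((n : ℂ) + 1))
    (u : ℂ) :
    halleyDen n u = 0 ↔
      u = (-(((n : ℂ) - 4) * ((n : ℂ) + 1)) + n * w) / (2 * ((n : ℂ) + 1) * ((n : ℂ) + 2)) ∨
      u = (-(((n : ℂ) - 4) * ((n : ℂ) + 1)) - n * w) / (2 * ((n : ℂ) + 1) * ((n : ℂ) + 2)) := by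
  have ha : ((n : ℂ) + 2) * (n + 1) ≠ 0 := by norm_cast
  have hdiscrim : discrim ((n + 2) * (n + 1) : ℂ) ((n + 1) * (n - 4)) 2 = n * w * (n * w) := by
    rw [discrim_halleyDen]
    linear_combination (-(n : ℂ) ^ 2) * hw
  rw [halleyDen, quadratic_eq_zero_iff ha hdiscrim]
  ring_nf

lemma halleyDen_pow_ne_zero_of_im_eq_zero {n : ℕ} (hn : 0 < n) (h7 : n < 7) {z : ℂ}
    (hz : z.im = 0) : halleyDen n (z ^ n) ≠ 0 := by
  have hcast : halleyDen n (z ^ n) = (halleyDen n (z.re ^ n) : ℝ) := by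
    conv_lhs => rw [← Complex.re_add_im z, hz]
    simp [halleyDen]
  have hneg : (n : ℝ) ^ 2 * ((n - 7) * (n + 1)) < 0 :=
    mul_neg_of_pos_of_neg (pow_pos (Nat.cast_pos.2 hn) 2)
      (mul_neg_of_neg_of_pos (sub_neg.2 (by exact_mod_cast h7)) (by positivity))
  rw [hcast, Complex.ofReal_ne_zero, halleyDen]
  refine quadratic_ne_zero_of_discrim_ne_sq (fun s => ?_) _
  rw [discrim_halleyDen]
  exact (hneg.trans_le (sq_nonneg s)).ne

lemma halley_denominator_mul_pow_sub_one (n : ℕ) (z : ℂ) :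
    2 * deriv (fun z => z * (z ^ n - 1)) z ^ 2 -
      z * (z ^ n - 1) * deriv (deriv fun z => z * (z ^ n - 1)) z = halleyDen n (z ^ n) := by
  rw [deriv_deriv_mul_pow_sub_one, deriv_mul_pow_sub_one, halleyDen]
  linear_combination (-((n : ℂ) + 1) * (z ^ n - 1)) * mul_natCast_mul_pow_sub_one n z

lemma halley_mul_pow_sub_one {n : ℕ} {z : ℂ} (hz : halleyDen n (z ^ n) ≠ 0) :
    halley (fun z => z * (z ^ n - 1)) z = z * (halleyNum n (z ^ n) / halleyDen n (z ^ n)) := by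
  rw [halley, halley_denominator_mul_pow_sub_one, deriv_mul_pow_sub_one]
  field_simp
  rw [halleyNum, halleyDen]
  ring

open Filter Topology in
lemma deriv_halley_mul_pow_sub_one {n : ℕ} {z : ℂ} (hz : halleyDen n (z ^ n) ≠ 0) :
    deriv (halley fun z => z * (z ^ n - 1)) z =
      n * (n + 1) * z ^ n * (z ^ n - 1) ^ 2 * ((n + 1) * (n + 2) * z ^ n + 2 * (n - 1)) /
        halleyDen n (z ^ n) ^ 2 := by
  have hcont : Continuous fun w : ℂ => halleyDen n (w ^ n) := by
    unfold halleyDen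
    fun_prop
  have heq : (halley fun z => z * (z ^ n - 1)) =ᶠ[𝓝 z]
      fun w => w * (halleyNum n (w ^ n) / halleyDen n (w ^ n)) :=
    (hcont.continuousAt.eventually_ne hz).mono fun w hw => halley_mul_pow_sub_one hw
  have hderiv : HasDerivAt (fun w => w * (halleyNum n (w ^ n) / halleyDen n (w ^ n))) _ z :=
    ((hasDerivAt_halleyNum n _).div (hasDerivAt_halleyDen n _) hz).id_mul_comp_pow n
  rw [heq.deriv_eq, hderiv.deriv, Pi.div_apply]
  field_simp
  rw [halleyNum, halleyDen]
  ring

lemma deriv_halley_eq_zero_and_ne_root_iff {n : ℕ} (hn : 2 ≤ n) {z : ℂ}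
    (hz : halleyDen n (z ^ n) ≠ 0) :
    (deriv (halley fun z => z * (z ^ n - 1)) z = 0 ∧ z * (z ^ n - 1) ≠ 0) ↔
      z ^ n = -2 * ((n : ℂ) - 1) / (((n : ℂ) + 1) * ((n : ℂ) + 2)) := by
  have hn0 : n ≠ 0 := by omega
  have h12 : ((n : ℂ) + 1) * (n + 2) ≠ 0 := by norm_cast
  have hcrit : ((n : ℂ) + 1) * (n + 2) * z ^ n + 2 * (n - 1) = 0 ↔
      z ^ n = -2 * ((n : ℂ) - 1) / (((n : ℂ) + 1) * ((n : ℂ) + 2)) := by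
    rw [eq_div_iff h12]
    constructor <;> intro h <;> linear_combination h
  have hc0 : -2 * ((n : ℂ) - 1) / (((n : ℂ) + 1) * ((n : ℂ) + 2)) ≠ 0 :=
    div_ne_zero (mul_ne_zero (by norm_num) (sub_ne_zero.2 (by exact_mod_cast (by omega : n ≠ 1))))
      h12
  have hc1 : -2 * ((n : ℂ) - 1) / (((n : ℂ) + 1) * ((n : ℂ) + 2)) ≠ 1 := by
    rw [ne_eq, div_eq_one_iff_eq h12]
    intro h
    have : ((n * (n + 5) : ℕ) : ℂ) = 0 := by
      push_cast
      linear_combination -h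
    norm_cast at this
    simp [hn0] at this
  rw [deriv_halley_mul_pow_sub_one hz]
  simp only [div_eq_zero_iff, mul_eq_zero, pow_eq_zero_iff two_ne_zero, hz, or_false, ne_eq,
    not_or, sub_eq_zero, Nat.cast_eq_zero, hn0, false_or, Nat.cast_add_one_ne_zero,
    pow_eq_zero_iff hn0, hcrit]
  constructor
  · rintro ⟨(h0 | h1) | hc, hz0, hz1⟩
    exacts [absurd h0 hz0, absurd h1 hz1, hc]
  · intro hc
    refine ⟨Or.inr hc, ?_, hc ▸ hc1⟩
    rintro rfl
    exact hc0 (by rw [← hc, zero_pow hn0])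

theorem halley_z_zn_minus_one (n : ℕ) (hn : 2 ≤ n)
    (p : ℂ → ℂ) (hp : ∀ z, p z = z * (z ^ n - 1))
    (den : ℂ → ℂ)
    (hden : ∀ z, den z = ((n : ℂ) + 2) * ((n : ℂ) + 1) * z ^ (2 * n) +
      ((n : ℂ) + 1) * ((n : ℂ) - 4) * z ^ n + 2) :
    (∀ z : ℂ, den z ≠ 0 →
      halley p z = (n : ℂ) * z ^ (n + 1) * (((n : ℂ) + 1) * z ^ n + ((n : ℂ) - 1)) / den z ∧
      deriv (halley p) z =
        (n : ℂ) * ((n : ℂ) + 1) * z ^ n * (z ^ n - 1) ^ 2 *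
          (((n : ℂ) + 1) * ((n : ℂ) + 2) * z ^ n + 2 * ((n : ℂ) - 1)) / (den z) ^ 2) ∧
    (∀ z : ℂ, den z ≠ 0 →
      ((deriv (halley p) z = 0 ∧ p z ≠ 0) ↔
        z ^ n = -2 * ((n : ℂ) - 1) / (((n : ℂ) + 1) * ((n : ℂ) + 2)))) ∧
    (∀ w : ℂ, w ^ 2 = ((n : ℂ) - 7) * ((n : ℂ) + 1) →
      ∀ z : ℂ, den z = 0 ↔
        z ^ n = (-(((n : ℂ) - 4) * ((n : ℂ) + 1)) + (n : ℂ) * w) /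
          (2 * ((n : ℂ) + 1) * ((n : ℂ) + 2)) ∨
        z ^ n = (-(((n : ℂ) - 4) * ((n : ℂ) + 1)) - (n : ℂ) * w) /
          (2 * ((n : ℂ) + 1) * ((n : ℂ) + 2))) ∧
    (n < 7 → ∀ z : ℂ, den z = 0 → z.im ≠ 0) := by
  obtain rfl : p = fun z => z * (z ^ n - 1) := funext hp
  have hden_pow : ∀ z, den z = halleyDen n (z ^ n) := fun z => by
    rw [hden, halleyDen, pow_mul']
    ring
  simp only [hden_pow]
  refine ⟨fun z hz => ⟨?_, deriv_halley_mul_pow_sub_one hz⟩,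
    fun z hz => deriv_halley_eq_zero_and_ne_root_iff hn hz,
    fun w hw z => halleyDen_eq_zero_iff n hw _,
    fun h7 z hz him => halleyDen_pow_ne_zero_of_im_eq_zero (by omega) h7 him hz⟩
  rw [halley_mul_pow_sub_one hz, halleyNum]
  ring
end

section
/- Let H_b be Halley's method applied to p_b(z) = z³ + 6z + b, so H_b(z) = (z⁵ - 2z³ - 2bz² - 2b)/(2z⁴ + 6z² - bz + 12) and H_b'(z) = 2(z³ + 6z + b)²(z² - 1)/(2z⁴ + 6z² - bz + 12)². Then H_b(1) = (1+4b)/(b-20), and the condition H_b²(1) = 1 (with 1 not a root of p_b, i.e., b ≠ -7) is equivalent to 10b⁵ - 757b⁴ + 9625b³ - 92141b² + 388025b - 1830821 = 0; in particular there exists b ∈ ℂ for which H_b has a superattracting 2-periodic cycle containing the critical point 1. -/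
open Polynomial

section Polynomial

variable (p : ℂ[X])

theorem halley_eval_eq :
    halley (fun z => p.eval z) = fun z => z - 2 * p.eval z * p.derivative.eval z /
      (2 * p.derivative.eval z ^ 2 - p.eval z * p.derivative.derivative.eval z) := by
  have hderiv (q : ℂ[X]) : deriv (fun z => q.eval z) = fun z => q.derivative.eval z :=
    funext fun _ => q.deriv
  funext z
  simp only [halley, hderiv]

theorem hasDerivAt_halley_eval {z : ℂ}
    (hz : 2 * p.derivative.eval z ^ 2 - p.eval z * p.derivative.derivative.eval z ≠ 0) :
    HasDerivAt (halley fun z => p.eval z)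
      (p.eval z ^ 2 * (3 * p.derivative.derivative.eval z ^ 2 -
          2 * p.derivative.eval z * p.derivative.derivative.derivative.eval z) /
        (2 * p.derivative.eval z ^ 2 - p.eval z * p.derivative.derivative.eval z) ^ 2) z := by
  have hp := p.hasDerivAt z
  have hp' := p.derivative.hasDerivAt z
  have hp'' := p.derivative.derivative.hasDerivAt z
  have hnum := (hp.const_mul 2).mul hp'
  have hden := ((hp'.pow 2).const_mul 2).sub (hp.mul hp'')
  rw [halley_eval_eq]
  refine ((hasDerivAt_id z).sub (hnum.div hden hz)).congr_deriv ?_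
  simp only [Pi.mul_apply, Pi.sub_apply, Pi.pow_apply]
  field_simp
  ring

end Polynomial

section Cubic

variable (b : ℂ)

theorem cubic_eq_eval :
    (fun z : ℂ => z ^ 3 + 6 * z + b) = fun z => (X ^ 3 + C 6 * X + C b).eval z := by
  funext z
  simp

theorem halley_denom_cubic (z : ℂ) :
    2 * (X ^ 3 + C 6 * X + C b).derivative.eval z ^ 2 -
        (X ^ 3 + C 6 * X + C b).eval z * (X ^ 3 + C 6 * X + C b).derivative.derivative.eval z =
      6 * (2 * z ^ 4 + 6 * z ^ 2 - b * z + 12) := by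
  norm_num
  ring

theorem halley_cubic_eq {z : ℂ} (hz : 2 * z ^ 4 + 6 * z ^ 2 - b * z + 12 ≠ 0) :
    halley (fun z => z ^ 3 + 6 * z + b) z =
      (z ^ 5 - 2 * z ^ 3 - 2 * b * z ^ 2 - 2 * b) / (2 * z ^ 4 + 6 * z ^ 2 - b * z + 12) := by
  have h6 : 6 * (2 * z ^ 4 + 6 * z ^ 2 - b * z + 12) ≠ 0 := mul_ne_zero (by norm_num) hz
  rw [cubic_eq_eval, halley_eval_eq]
  beta_reduce
  rw [halley_denom_cubic, sub_div' h6, div_eq_div_iff h6 hz]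
  norm_num
  ring

theorem hasDerivAt_halley_cubic {z : ℂ} (hz : 2 * z ^ 4 + 6 * z ^ 2 - b * z + 12 ≠ 0) :
    HasDerivAt (halley fun z => z ^ 3 + 6 * z + b)
      (2 * (z ^ 3 + 6 * z + b) ^ 2 * (z ^ 2 - 1) / (2 * z ^ 4 + 6 * z ^ 2 - b * z + 12) ^ 2) z := by
  have hden := halley_denom_cubic b z
  rw [cubic_eq_eval]
  convert hasDerivAt_halley_eval _ (hden ▸ mul_ne_zero (by norm_num) hz) using 1
  rw [hden]
  norm_num
  field_simp
  ring

theorem cubic_denom_one_ne_zero {b : ℂ} (hb : b ≠ 20) :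
    2 * (1 : ℂ) ^ 4 + 6 * 1 ^ 2 - b * 1 + 12 ≠ 0 := by
  contrapose! hb
  linear_combination -hb

theorem halley_cubic_one {b : ℂ} (hb : b ≠ 20) :
    halley (fun z => z ^ 3 + 6 * z + b) 1 = (1 + 4 * b) / (b - 20) := by
  have hden := cubic_denom_one_ne_zero hb
  rw [halley_cubic_eq b hden, div_eq_div_iff hden (sub_ne_zero.mpr hb)]
  ring

theorem hasDerivAt_halley_cubic_one {b : ℂ} (hb : b ≠ 20) :
    HasDerivAt (halley fun z => z ^ 3 + 6 * z + b) 0 1 := by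
  simpa using hasDerivAt_halley_cubic b (cubic_denom_one_ne_zero hb)

theorem halley_cubic_halley_cubic_one_eq_one_iff {b : ℂ} (hb₇ : b ≠ -7) (hb₂₀ : b ≠ 20)
    (hw : 2 * ((1 + 4 * b) / (b - 20)) ^ 4 + 6 * ((1 + 4 * b) / (b - 20)) ^ 2 -
      b * ((1 + 4 * b) / (b - 20)) + 12 ≠ 0) :
    halley (fun z => z ^ 3 + 6 * z + b) (halley (fun z => z ^ 3 + 6 * z + b) 1) = 1 ↔
      10 * b ^ 5 - 757 * b ^ 4 + 9625 * b ^ 3 - 92141 * b ^ 2 + 388025 * b - 1830821 = 0 := by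
  have hb₂₀' : b - 20 ≠ 0 := sub_ne_zero.mpr hb₂₀
  have hb₇' : b + 7 ≠ 0 := by
    contrapose! hb₇
    linear_combination hb₇
  set w := (1 + 4 * b) / (b - 20) with hw_def
  have key : (w ^ 5 - 2 * w ^ 3 - 2 * b * w ^ 2 - 2 * b) - (2 * w ^ 4 + 6 * w ^ 2 - b * w + 12) =
      -3 * (b + 7) * (10 * b ^ 5 - 757 * b ^ 4 + 9625 * b ^ 3 - 92141 * b ^ 2 + 388025 * b
        - 1830821) / (b - 20) ^ 5 := by
    rw [hw_def]
    field_simp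
    ring
  rw [halley_cubic_one hb₂₀, halley_cubic_eq b hw, div_eq_one_iff_eq hw, ← sub_eq_zero, key]
  simp [hb₇', hb₂₀']

end Cubic

section Quintic

theorem exists_quintic_root :
    ∃ b : ℂ, 10 * b ^ 5 - 757 * b ^ 4 + 9625 * b ^ 3 - 92141 * b ^ 2 + 388025 * b - 1830821 = 0 := by
  have hdeg : (C 10 * X ^ 5 - C 757 * X ^ 4 + C 9625 * X ^ 3 - C 92141 * X ^ 2 + C 388025 * X
      - C 1830821 : ℂ[X]).degree = 5 := by
    compute_degree!
  obtain ⟨b, hb⟩ := Complex.exists_root (hdeg ▸ (by norm_num : (0 : WithBot ℕ) < 5))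
  exact ⟨b, by simpa using hb⟩

variable {b : ℂ}

theorem ne_neg_seven_of_quintic
    (hQ : 10 * b ^ 5 - 757 * b ^ 4 + 9625 * b ^ 3 - 92141 * b ^ 2 + 388025 * b - 1830821 = 0) :
    b ≠ -7 := by
  rintro rfl
  norm_num at hQ

theorem ne_twenty_of_quintic
    (hQ : 10 * b ^ 5 - 757 * b ^ 4 + 9625 * b ^ 3 - 92141 * b ^ 2 + 388025 * b - 1830821 = 0) :
    b ≠ 20 := by
  rintro rfl
  norm_num at hQ

theorem halley_cubic_denom_ne_zero_of_quintic
    (hQ : 10 * b ^ 5 - 757 * b ^ 4 + 9625 * b ^ 3 - 92141 * b ^ 2 + 388025 * b - 1830821 = 0) :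
    2 * ((1 + 4 * b) / (b - 20)) ^ 4 + 6 * ((1 + 4 * b) / (b - 20)) ^ 2 -
      b * ((1 + 4 * b) / (b - 20)) + 12 ≠ 0 := by
  have hb₂₀ : b - 20 ≠ 0 := sub_ne_zero.mpr (ne_twenty_of_quintic hQ)
  intro h
  field_simp at h
  -- Bézout certificate: a combination of the two equations that is a constant times `(b - 20)³`
  have : (22876792454961 : ℂ) * (b - 20) ^ 3 = 0 := by
    linear_combination (294312410 - 24830251 * b + 638454 * b ^ 2 + 323762 * b ^ 3 -
        5260 * b ^ 4) * (b - 20) ^ 3 * h +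
      (296539079 - 20614267 * b + 1696242 * b ^ 2 + 422066 * b ^ 3 - 2104 * b ^ 4) *
        (b - 20) ^ 3 * hQ
  simp [hb₂₀] at this

end Quintic

theorem halley_cubic_superattracting_two_cycle :
    (∀ b : ℂ, ∀ p : ℂ → ℂ, (∀ z, p z = z ^ 3 + 6 * z + b) →
      (∀ z : ℂ, 2 * z ^ 4 + 6 * z ^ 2 - b * z + 12 ≠ 0 →
        halley p z = (z ^ 5 - 2 * z ^ 3 - 2 * b * z ^ 2 - 2 * b) /
          (2 * z ^ 4 + 6 * z ^ 2 - b * z + 12) ∧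
        deriv (halley p) z = 2 * (z ^ 3 + 6 * z + b) ^ 2 * (z ^ 2 - 1) /
          (2 * z ^ 4 + 6 * z ^ 2 - b * z + 12) ^ 2) ∧
      (b ≠ 20 → halley p 1 = (1 + 4 * b) / (b - 20)) ∧
      (b ≠ -7 → b ≠ 20 →
        2 * ((1 + 4 * b) / (b - 20)) ^ 4 + 6 * ((1 + 4 * b) / (b - 20)) ^ 2 -
          b * ((1 + 4 * b) / (b - 20)) + 12 ≠ 0 →
        (halley p (halley p 1) = 1 ↔
          10 * b ^ 5 - 757 * b ^ 4 + 9625 * b ^ 3 - 92141 * b ^ 2 +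
            388025 * b - 1830821 = 0))) ∧
    (∃ b z₁ : ℂ, z₁ ≠ 1 ∧
      halley (fun z => z ^ 3 + 6 * z + b) 1 = z₁ ∧
      halley (fun z => z ^ 3 + 6 * z + b) z₁ = 1 ∧
      deriv (halley (fun z => z ^ 3 + 6 * z + b) ∘
        halley (fun z => z ^ 3 + 6 * z + b)) 1 = 0) := by
  refine ⟨fun b p hp => ?_, ?_⟩
  · obtain rfl : p = fun z => z ^ 3 + 6 * z + b := funext hp
    exact ⟨fun z hz => ⟨halley_cubic_eq b hz, (hasDerivAt_halley_cubic b hz).deriv⟩,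
      halley_cubic_one, halley_cubic_halley_cubic_one_eq_one_iff⟩
  · obtain ⟨b, hQ⟩ := exists_quintic_root
    have hb₇ := ne_neg_seven_of_quintic hQ
    have hb₂₀ := ne_twenty_of_quintic hQ
    have hw := halley_cubic_denom_ne_zero_of_quintic hQ
    have h₁ := halley_cubic_one hb₂₀
    have h₂ := (halley_cubic_halley_cubic_one_eq_one_iff hb₇ hb₂₀ hw).mpr hQ
    refine ⟨b, _, ?_, h₁, h₁ ▸ h₂, ?_⟩
    · rw [Ne, div_eq_one_iff_eq (sub_ne_zero.mpr hb₂₀)]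
      contrapose! hb₇
      linear_combination hb₇ / 3
    · have h := (h₁ ▸ hasDerivAt_halley_cubic b hw).comp 1 (hasDerivAt_halley_cubic_one hb₂₀)
      simpa using h.deriv
end
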